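/- There exist constants c₁, c₂ > 0 such that, for G chosen uniformly at random among all subsets of [N] × [N], the probability that c₁ · N ≤ D_∩(G | 𝓖_{N,N}) ≤ c₂ · N tends to 1 as N → ∞; that is, a random bipartite graph asymptotically almost surely has intersection graph complexity Θ(N). -/

import Mathlib

open Set Filter

section Defs

variable {Γ : Type*}

/-- `StepOK 𝓑 seq ops` says that each set `seq i` in the sequence is obtained as the
union or intersection (according to `ops i`) of two sets, each of which is either a
generator in `𝓑` or an earlier set of the sequence. -/
def StepOK (𝓑 : Set (Set Γ)) {t : ℕ} (seq : Fin t → Set Γ) (ops : Fin t → Bool) : Prop :=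
  ∀ i : Fin t, ∃ X Y : Set Γ,
    (X ∈ 𝓑 ∨ ∃ j : Fin t, j < i ∧ X = seq j) ∧
    (Y ∈ 𝓑 ∨ ∃ j : Fin t, j < i ∧ Y = seq j) ∧
    seq i = if ops i = true then X ∩ Y else X ∪ Y

/-- The number of intersection operations used in the sequence. -/
def interCount {t : ℕ} (ops : Fin t → Bool) : ℕ :=
  (Finset.univ.filter fun i => ops i = true).card

/-- The number of union operations used in the sequence. -/
def unionCount {t : ℕ} (ops : Fin t → Bool) : ℕ :=
  (Finset.univ.filter fun i => ops i = false).card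

/-- The discrete complexity `D(A | 𝓑)`: the minimum length of a sequence generating
`A` from `𝓑` (`⊤` if none exists). -/
noncomputable def Dtot (A : Set Γ) (𝓑 : Set (Set Γ)) : ℕ∞ :=
  sInf {m : ℕ∞ | ∃ (t : ℕ) (seq : Fin (t + 1) → Set Γ) (ops : Fin (t + 1) → Bool),
    StepOK 𝓑 seq ops ∧ seq (Fin.last t) = A ∧ m = ((t + 1 : ℕ) : ℕ∞)}

/-- The intersection complexity `D_∩(A | 𝓑)`: the minimum number of intersection
operations over all sequences generating `A` from `𝓑`. -/
noncomputable def Dcap (A : Set Γ) (𝓑 : Set (Set Γ)) : ℕ∞ :=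
  sInf {m : ℕ∞ | ∃ (t : ℕ) (seq : Fin (t + 1) → Set Γ) (ops : Fin (t + 1) → Bool),
    StepOK 𝓑 seq ops ∧ seq (Fin.last t) = A ∧ m = ((interCount ops : ℕ) : ℕ∞)}

/-- The union complexity `D_∪(A | 𝓑)`. -/
noncomputable def Dcup (A : Set Γ) (𝓑 : Set (Set Γ)) : ℕ∞ :=
  sInf {m : ℕ∞ | ∃ (t : ℕ) (seq : Fin (t + 1) → Set Γ) (ops : Fin (t + 1) → Bool),
    StepOK 𝓑 seq ops ∧ seq (Fin.last t) = A ∧ m = ((unionCount ops : ℕ) : ℕ∞)}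

/-- Simultaneous discrete complexity `D(A_1, …, A_ℓ | 𝓑)` of generating every set in
the family `As` from `𝓑`. -/
noncomputable def DtotSim (As : Set (Set Γ)) (𝓑 : Set (Set Γ)) : ℕ∞ :=
  sInf {m : ℕ∞ | ∃ (t : ℕ) (seq : Fin (t + 1) → Set Γ) (ops : Fin (t + 1) → Bool),
    StepOK 𝓑 seq ops ∧ (∀ A ∈ As, ∃ i, seq i = A) ∧ m = ((t + 1 : ℕ) : ℕ∞)}

/-- Simultaneous intersection complexity. -/
noncomputable def DcapSim (As : Set (Set Γ)) (𝓑 : Set (Set Γ)) : ℕ∞ :=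
  sInf {m : ℕ∞ | ∃ (t : ℕ) (seq : Fin (t + 1) → Set Γ) (ops : Fin (t + 1) → Bool),
    StepOK 𝓑 seq ops ∧ (∀ A ∈ As, ∃ i, seq i = A) ∧ m = ((interCount ops : ℕ) : ℕ∞)}

/-- Simultaneous union complexity. -/
noncomputable def DcupSim (As : Set (Set Γ)) (𝓑 : Set (Set Γ)) : ℕ∞ :=
  sInf {m : ℕ∞ | ∃ (t : ℕ) (seq : Fin (t + 1) → Set Γ) (ops : Fin (t + 1) → Bool),
    StepOK 𝓑 seq ops ∧ (∀ A ∈ As, ∃ i, seq i = A) ∧ m = ((unionCount ops : ℕ) : ℕ∞)}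

/-- A semi-filter over `U`: a nonempty, upward-closed (within `U`) family of subsets
of `U` not containing `∅`. -/
def SemiFilter (U : Set Γ) (F : Set (Set Γ)) : Prop :=
  F.Nonempty ∧ (∀ S ∈ F, S ⊆ U) ∧
    (∀ S ∈ F, ∀ T : Set Γ, S ⊆ T → T ⊆ U → T ∈ F) ∧ ∅ ∉ F

/-- `F` is above the element `w` with respect to `𝓑` and `U`. -/
def Above (𝓑 : Set (Set Γ)) (U : Set Γ) (F : Set (Set Γ)) (w : Γ) : Prop :=
  ∀ B ∈ 𝓑, w ∈ B → B ∩ U ∈ F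

/-- `F` preserves the pair `p = (E, H)`. -/
def PreservesPair (F : Set (Set Γ)) (p : Set Γ × Set Γ) : Prop :=
  p.1 ∈ F → p.2 ∈ F → p.1 ∩ p.2 ∈ F

/-- `Λ` is a family of pairs of subsets of `U = Aᶜ` such that no semi-filter over `U`
both preserves `Λ` and is above some element of `A`. -/
def Covers (A : Set Γ) (𝓑 : Set (Set Γ)) (Λ : Finset (Set Γ × Set Γ)) : Prop :=
  (∀ p ∈ Λ, p.1 ⊆ Aᶜ ∧ p.2 ⊆ Aᶜ) ∧
    ¬∃ (F : Set (Set Γ)) (a : Γ), SemiFilter Aᶜ F ∧ a ∈ A ∧ Above 𝓑 Aᶜ F a ∧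
      ∀ p ∈ Λ, PreservesPair F p

/-- The cover complexity `ρ(A, 𝓑)`. -/
noncomputable def rho (A : Set Γ) (𝓑 : Set (Set Γ)) : ℕ∞ :=
  sInf {m : ℕ∞ | ∃ Λ : Finset (Set Γ × Set Γ), Covers A 𝓑 Λ ∧ m = ((Λ.card : ℕ) : ℕ∞)}

/-- A semi-ultra-filter over `U`: a semi-filter containing, for every `A' ⊆ U`, at
least one of `A'` and `U \ A'`. -/
def SemiUltraFilter (U : Set Γ) (F : Set (Set Γ)) : Prop :=
  SemiFilter U F ∧ ∀ A' : Set Γ, A' ⊆ U → (A' ∈ F ∨ U \ A' ∈ F)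

/-- The conondeterministic cover complexity `ρ_ultra(A, 𝓑)`. -/
noncomputable def rhoUltra (A : Set Γ) (𝓑 : Set (Set Γ)) : ℕ∞ :=
  sInf {m : ℕ∞ | ∃ Λ : Finset (Set Γ × Set Γ),
    (∀ p ∈ Λ, p.1 ⊆ Aᶜ ∧ p.2 ⊆ Aᶜ) ∧
    (¬∃ (F : Set (Set Γ)) (a : Γ), SemiUltraFilter Aᶜ F ∧ a ∈ A ∧ Above 𝓑 Aᶜ F a ∧
      ∀ p ∈ Λ, PreservesPair F p) ∧
    m = ((Λ.card : ℕ) : ℕ∞)}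

/-- One step of the evaluation of a syntactic (possibly cyclic) sequence: an argument
is either a reference to a member of the sequence or a fixed generator set. -/
def cycEval {t : ℕ} (arg1 arg2 : Fin t → Fin t ⊕ Set Γ) (ops : Fin t → Bool) :
    ℕ → Fin t → Set Γ
  | 0 => fun _ => ∅
  | j + 1 => fun i =>
      cycEval arg1 arg2 ops j i ∪
        (if ops i = true then
          Sum.elim (cycEval arg1 arg2 ops j) id (arg1 i) ∩
            Sum.elim (cycEval arg1 arg2 ops j) id (arg2 i)
        else
          Sum.elim (cycEval arg1 arg2 ops j) id (arg1 i) ∪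
            Sum.elim (cycEval arg1 arg2 ops j) id (arg2 i))

/-- The fixed set arguments of a syntactic sequence must be generators from `𝓑`. -/
def ArgsOK (𝓑 : Set (Set Γ)) {t : ℕ} (arg1 arg2 : Fin t → Fin t ⊕ Set Γ) : Prop :=
  ∀ i : Fin t, (∀ B : Set Γ, arg1 i = Sum.inr B → B ∈ 𝓑) ∧
    (∀ B : Set Γ, arg2 i = Sum.inr B → B ∈ 𝓑)

/-- The cyclic intersection complexity `D°_∩(A | 𝓑)`: the minimum number of
intersection operations over all syntactic sequences generating `A` from `𝓑`. -/
noncomputable def DcapCyc (A : Set Γ) (𝓑 : Set (Set Γ)) : ℕ∞ :=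
  sInf {m : ℕ∞ | ∃ (t : ℕ) (arg1 arg2 : Fin (t + 1) → Fin (t + 1) ⊕ Set Γ)
      (ops : Fin (t + 1) → Bool),
    ArgsOK 𝓑 arg1 arg2 ∧
    (∃ j : ℕ, ∀ j' ≥ j, cycEval arg1 arg2 ops j' (Fin.last t) = A) ∧
    m = ((interCount ops : ℕ) : ℕ∞)}

end Defs

/-- The row star `R_i ⊆ [N] × [M]`. -/
def rowSet (N M : ℕ) (i : Fin N) : Set (Fin N × Fin M) := {p | p.1 = i}

/-- The column star `C_j ⊆ [N] × [M]`. -/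
def colSet (N M : ℕ) (j : Fin M) : Set (Fin N × Fin M) := {p | p.2 = j}

/-- The generators `𝓖_{N,M}` of graph complexity: all row stars and column stars. -/
def graphGens (N M : ℕ) : Set (Set (Fin N × Fin M)) :=
  Set.range (rowSet N M) ∪ Set.range (colSet N M)

/-- The generators `𝓑_m` of Boolean circuit complexity over `{0,1}^m`:
all sets `B_i = {v : v_i = 1}` and their complements. -/
def cubeGens (m : ℕ) : Set (Set (Fin m → Bool)) :=
  {S | ∃ i : Fin m, S = {v | v i = true} ∨ S = {v | v i = false}}

/-- `bin : [N] → {0,1}^n` for `N = 2^n`: the element `k` (representing the integer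
`k + 1`) maps to the string `w` with `num(w) = k`, i.e. position `j` holds bit
`n - 1 - j` of `k`. -/
def binMap (n : ℕ) (k : Fin (2 ^ n)) : Fin n → Bool :=
  fun j => (k : ℕ).testBit (n - 1 - (j : ℕ))

/-- The bijection `φ : [N] × [N] → {0,1}^{2n}`, `φ(u, v) = bin(u)bin(v)`. -/
def phi (n : ℕ) (p : Fin (2 ^ n) × Fin (2 ^ n)) : Fin (2 * n) → Bool :=
  fun j =>
    if h : (j : ℕ) < n then binMap n p.1 ⟨(j : ℕ), h⟩
    else binMap n p.2 ⟨(j : ℕ) - n, by have := j.isLt; omega⟩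

/-- The canonical family `𝓕_e` for an edge `e = (u, v)` of a graph `G`:
all `W ⊆ Ḡ` containing `R_u ∩ Ḡ` or `C_v ∩ Ḡ`. -/
def canonFam (N : ℕ) (G : Set (Fin N × Fin N)) (e : Fin N × Fin N) :
    Set (Set (Fin N × Fin N)) :=
  {W | W ⊆ Gᶜ ∧ (rowSet N N e.1 ∩ Gᶜ ⊆ W ∨ colSet N N e.2 ∩ Gᶜ ⊆ W)}

/-- The canonical cover complexity `ρ_can(G, 𝓖_{N,N})`: the minimum size of a family
`Λ` of pairs of subsets of `Ḡ` such that every canonical semi-filter `𝓕_e`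
(for `e ∈ G`, when it is a semi-filter) fails to preserve some pair in `Λ`. -/
noncomputable def rhoCan (N : ℕ) (G : Set (Fin N × Fin N)) : ℕ∞ :=
  sInf {m : ℕ∞ | ∃ Λ : Finset (Set (Fin N × Fin N) × Set (Fin N × Fin N)),
    (∀ p ∈ Λ, p.1 ⊆ Gᶜ ∧ p.2 ⊆ Gᶜ) ∧
    (∀ e ∈ G, SemiFilter Gᶜ (canonFam N G e) →
      ∃ p ∈ Λ, ¬ PreservesPair (canonFam N G e) p) ∧
    m = ((Λ.card : ℕ) : ℕ∞)}

/-!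
Upper bound: row `i` of `G` is `R_i ∩ ⋃_{(i,j) ∈ G} C_j`, so `G` costs one
intersection per row.

Lower bound: a sequence with `k` intersections is described by a circuit whose `k` gates
intersect two unions of generators and earlier gates and whose output is such a union. There
are at most `2^((2N + k)(2k + 1))` circuits, which for `k = N / 8` is at most `2^(N² - N)`:
a vanishing fraction of the `2^(N²)` graphs has `D_∩(G) ≤ N / 8`.
-/

section Sequences

variable {Γ : Type*} {𝓑 : Set (Set Γ)}

lemma interCount_append {m n : ℕ} (o₁ : Fin m → Bool) (o₂ : Fin n → Bool) :
    interCount (Fin.append o₁ o₂) = interCount o₁ + interCount o₂ := by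
  simp only [interCount, Finset.card_filter, Fin.sum_univ_add, Fin.append_left, Fin.append_right]

lemma interCount_snoc {t : ℕ} (o : Fin t → Bool) (b : Bool) :
    interCount (Fin.snoc o b : Fin (t + 1) → Bool) = interCount o + if b then 1 else 0 := by
  simp only [interCount, Finset.card_filter, Fin.sum_univ_castSucc, Fin.snoc_castSucc,
    Fin.snoc_last]

lemma StepOK.append {m n : ℕ} {s₁ : Fin m → Set Γ} {o₁ : Fin m → Bool}
    {s₂ : Fin n → Set Γ} {o₂ : Fin n → Bool} (h₁ : StepOK 𝓑 s₁ o₁)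
    (h₂ : StepOK 𝓑 s₂ o₂) : StepOK 𝓑 (Fin.append s₁ s₂) (Fin.append o₁ o₂) := by
  intro i
  induction i using Fin.addCases with
  | left i =>
    obtain ⟨X, Y, hX, hY, hi⟩ := h₁ i
    refine ⟨X, Y, hX.imp_right ?_, hY.imp_right ?_,
      by simpa only [Fin.append_left] using hi⟩ <;>
    · rintro ⟨j, hj, rfl⟩
      exact ⟨Fin.castAdd n j, hj, (Fin.append_left _ _ _).symm⟩
  | right i =>
    obtain ⟨X, Y, hX, hY, hi⟩ := h₂ i
    refine ⟨X, Y, hX.imp_right ?_, hY.imp_right ?_,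
      by simpa only [Fin.append_right] using hi⟩ <;>
    · rintro ⟨j, hj, rfl⟩
      exact ⟨Fin.natAdd m j, (Fin.natAdd_lt_natAdd_iff m).2 hj, (Fin.append_right _ _ _).symm⟩

lemma StepOK.snoc {t : ℕ} {s : Fin t → Set Γ} {o : Fin t → Bool} (h : StepOK 𝓑 s o)
    {X Y : Set Γ} (hX : X ∈ 𝓑 ∨ X ∈ Set.range s) (hY : Y ∈ 𝓑 ∨ Y ∈ Set.range s)
    (b : Bool) :
    StepOK 𝓑 (Fin.snoc s (if b then X ∩ Y else X ∪ Y) : Fin (t + 1) → Set Γ)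
      (Fin.snoc o b) := by
  intro i
  induction i using Fin.lastCases with
  | last =>
    refine ⟨X, Y, hX.imp_right ?_, hY.imp_right ?_, by simp only [Fin.snoc_last]⟩ <;>
    · rintro ⟨j, rfl⟩
      exact ⟨j.castSucc, Fin.castSucc_lt_last j, by simp only [Fin.snoc_castSucc]⟩
  | cast i =>
    obtain ⟨X', Y', hX', hY', hi⟩ := h i
    refine ⟨X', Y', hX'.imp_right ?_, hY'.imp_right ?_,
      by simpa only [Fin.snoc_castSucc] using hi⟩ <;>
    · rintro ⟨j, hj, rfl⟩
      exact ⟨j.castSucc, Fin.castSucc_lt_castSucc_iff.2 hj, by simp only [Fin.snoc_castSucc]⟩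

end Sequences

section Complexity

variable {Γ : Type*} {𝓑 : Set (Set Γ)}

lemma dcap_le_interCount {t : ℕ} {seq : Fin (t + 1) → Set Γ} {ops : Fin (t + 1) → Bool}
    (h : StepOK 𝓑 seq ops) : Dcap (seq (Fin.last t)) 𝓑 ≤ interCount ops :=
  sInf_le ⟨t, seq, ops, h, rfl, rfl⟩

/-- Sequences can be padded with steps `A ∩ A`, so the bound is attained exactly. -/
lemma exists_stepOK_of_dcap_le {A : Set Γ} {k : ℕ} (h : Dcap A 𝓑 ≤ k) :
    ∃ (t : ℕ) (seq : Fin (t + 1) → Set Γ) (ops : Fin (t + 1) → Bool),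
      StepOK 𝓑 seq ops ∧ seq (Fin.last t) = A ∧ interCount ops = k := by
  obtain ⟨t, seq, ops, hS, hA, hc⟩ : Dcap A 𝓑 ∈ _ := csInf_mem <|
    Set.nonempty_iff_ne_empty.2 fun he => by
      rw [Dcap, he, sInf_empty, top_le_iff] at h
      exact ENat.natCast_ne_top k h
  have hle : interCount ops ≤ k := by exact_mod_cast hc ▸ h
  clear h hc
  induction k, hle using Nat.le_induction with
  | base => exact ⟨t, seq, ops, hS, hA, rfl⟩
  | succ k _ ih =>
    obtain ⟨t', seq', ops', hS', hA', hc'⟩ := ih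
    have hA : A ∈ Set.range seq' := ⟨Fin.last t', hA'⟩
    refine ⟨t' + 1, Fin.snoc seq' A, Fin.snoc ops' true, ?_, Fin.snoc_last _ _, ?_⟩
    · simpa only [↓reduceIte, Set.inter_self] using hS'.snoc (.inr hA) (.inr hA) true
    · rw [interCount_snoc, hc', if_pos rfl]

lemma dcap_eq_zero_of_mem {B : Set Γ} (hB : B ∈ 𝓑) : Dcap B 𝓑 = 0 := by
  have h := dcap_le_interCount (t := 0) (seq := fun _ => B) (ops := fun _ => false)
    fun _ => ⟨B, B, .inl hB, .inl hB, by simp⟩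
  simpa [interCount] using h

lemma dcap_combine_le (b : Bool) {A B : Set Γ} {a c : ℕ} (hA : Dcap A 𝓑 ≤ a)
    (hB : Dcap B 𝓑 ≤ c) :
    Dcap (if b then A ∩ B else A ∪ B) 𝓑 ≤ ↑(a + c + if b then 1 else 0) := by
  obtain ⟨t₁, s₁, o₁, hS₁, hA, hc₁⟩ := exists_stepOK_of_dcap_le hA
  obtain ⟨t₂, s₂, o₂, hS₂, hB, hc₂⟩ := exists_stepOK_of_dcap_le hB
  have hAmem : A ∈ Set.range (Fin.append s₁ s₂) :=
    ⟨Fin.castAdd _ (Fin.last t₁), by rw [Fin.append_left, hA]⟩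
  have hBmem : B ∈ Set.range (Fin.append s₁ s₂) :=
    ⟨Fin.natAdd _ (Fin.last t₂), by rw [Fin.append_right, hB]⟩
  have h := dcap_le_interCount ((hS₁.append hS₂).snoc (.inr hAmem) (.inr hBmem) b)
  rwa [Fin.snoc_last, interCount_snoc, interCount_append, hc₁, hc₂] at h

lemma dcap_union_le {A B : Set Γ} {a c : ℕ} (hA : Dcap A 𝓑 ≤ a) (hB : Dcap B 𝓑 ≤ c) :
    Dcap (A ∪ B) 𝓑 ≤ ↑(a + c) := by
  simpa using dcap_combine_le false hA hB

lemma dcap_inter_le {A B : Set Γ} {a c : ℕ} (hA : Dcap A 𝓑 ≤ a) (hB : Dcap B 𝓑 ≤ c) :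
    Dcap (A ∩ B) 𝓑 ≤ ↑(a + c + 1) := by
  simpa using dcap_combine_le true hA hB

lemma dcap_biUnion_le {α : Type*} {s : Finset α} (hs : s.Nonempty) {f : α → Set Γ}
    {c : α → ℕ} (h : ∀ x ∈ s, Dcap (f x) 𝓑 ≤ c x) :
    Dcap (⋃ x ∈ s, f x) 𝓑 ≤ ↑(∑ x ∈ s, c x) := by
  classical
  induction hs using Finset.Nonempty.cons_induction with
  | singleton a => simpa using h a (Finset.mem_singleton_self a)
  | cons a s ha _ ih =>
    rw [Finset.sum_cons, Finset.cons_eq_insert, Finset.set_biUnion_insert]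
    exact dcap_union_le (h a (Finset.mem_cons_self a s))
      (ih fun x hx => h x (Finset.mem_cons_of_mem hx))

end Complexity

section GraphUpperBound

variable {N M : ℕ}

lemma rowSet_mem_graphGens (i : Fin N) : rowSet N M i ∈ graphGens N M := .inl ⟨i, rfl⟩

lemma colSet_mem_graphGens (j : Fin M) : colSet N M j ∈ graphGens N M := .inr ⟨j, rfl⟩

/-- Row `i` of `G` is `R_i ∩ ⋃_{(i,j) ∈ G} C_j`, or `R_i ∩ R_{i'}` when it is empty. -/
lemma dcap_inter_rowSet_le_one (hN : 2 ≤ N) (G : Set (Fin N × Fin M)) (i : Fin N) :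
    Dcap (G ∩ rowSet N M i) (graphGens N M) ≤ 1 := by
  classical
  set S := Finset.univ.filter fun j => (i, j) ∈ G
  have hrow : G ∩ rowSet N M i = rowSet N M i ∩ ⋃ j ∈ S, colSet N M j := by
    ext ⟨a, b⟩
    simp only [rowSet, colSet, S, Set.mem_inter_iff, Set.mem_ofPred_eq, Set.mem_iUnion,
      Finset.mem_filter, Finset.mem_univ, true_and, exists_prop, exists_eq_right']
    constructor
    · rintro ⟨hab, rfl⟩
      exact ⟨rfl, hab⟩
    · rintro ⟨rfl, hab⟩
      exact ⟨hab, rfl⟩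
  have hR := dcap_eq_zero_of_mem (rowSet_mem_graphGens (M := M) i)
  rcases S.eq_empty_or_nonempty with hS | hS
  · have : Nontrivial (Fin N) := Fin.nontrivial_iff_two_le.2 hN
    obtain ⟨i', hi'⟩ := exists_ne i
    have hempty : G ∩ rowSet N M i = rowSet N M i ∩ rowSet N M i' := by
      rw [hrow, hS]
      ext ⟨a, b⟩
      simp only [rowSet, Finset.notMem_empty, Set.iUnion_of_empty, Set.iUnion_empty,
        Set.inter_empty, Set.mem_empty_iff_false, Set.mem_inter_iff, Set.mem_ofPred_eq,
        false_iff, not_and]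
      rintro rfl
      exact hi'.symm
    rw [hempty]
    simpa using dcap_inter_le hR.le (dcap_eq_zero_of_mem (rowSet_mem_graphGens i')).le
  · rw [hrow]
    simpa using dcap_inter_le hR.le
      (dcap_biUnion_le hS fun j _ => (dcap_eq_zero_of_mem (colSet_mem_graphGens j)).le)

lemma dcap_le_of_two_le (hN : 2 ≤ N) (G : Set (Fin N × Fin M)) :
    Dcap G (graphGens N M) ≤ N := by
  have : Nonempty (Fin N) := ⟨⟨0, by omega⟩⟩
  have hG : G = ⋃ i ∈ Finset.univ, G ∩ rowSet N M i := by
    ext p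
    simp [rowSet]
  rw [hG]
  simpa using dcap_biUnion_le Finset.univ_nonempty fun i _ => dcap_inter_rowSet_le_one hN G i

end GraphUpperBound

section Circuits

variable {Γ ι : Type*} {k : ℕ}

/-- A circuit with `k` intersection gates: gate `m` intersects the unions of generators and
gate values indexed by `(c.1 m).1` and `(c.1 m).2`; the output is the union indexed by `c.2`. -/
abbrev Circuit (ι : Type*) (k : ℕ) : Type _ :=
  (Fin k → Set (ι ⊕ Fin k) × Set (ι ⊕ Fin k)) × Set (ι ⊕ Fin k)

def unionOf (g : ι → Set Γ) (v : Fin k → Set Γ) (S : Set (ι ⊕ Fin k)) : Set Γ :=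
  ⋃ x ∈ S, Sum.elim g v x

def gateStep (g : ι → Set Γ) (wires : Fin k → Set (ι ⊕ Fin k) × Set (ι ⊕ Fin k))
    (v : Fin k → Set Γ) (m : Fin k) : Set Γ :=
  unionOf g v (wires m).1 ∩ unionOf g v (wires m).2

/-- Gate values are computed by `k` rounds of simultaneous evaluation, which is exact when
every gate reads only earlier gates. -/
def Circuit.eval (g : ι → Set Γ) (c : Circuit ι k) : Set Γ :=
  unionOf g ((gateStep g c.1)^[k] fun _ => ∅) c.2

lemma unionOf_congr (g : ι → Set Γ) {v w : Fin k → Set Γ} {S : Set (ι ⊕ Fin k)}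
    (h : ∀ m, Sum.inr m ∈ S → v m = w m) : unionOf g v S = unionOf g w S := by
  refine Set.iUnion₂_congr ?_
  rintro (i | m) hm
  exacts [rfl, h m hm]

lemma iterate_gateStep_eq {g : ι → Set Γ}
    {wires : Fin k → Set (ι ⊕ Fin k) × Set (ι ⊕ Fin k)} {v : Fin k → Set Γ}
    (hv : ∀ m, v m = gateStep g wires v m)
    (h₁ : ∀ m m', Sum.inr m' ∈ (wires m).1 → m' < m)
    (h₂ : ∀ m m', Sum.inr m' ∈ (wires m).2 → m' < m) (n : ℕ) {m : Fin k}
    (hm : (m : ℕ) < n) :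
    (gateStep g wires)^[n] (fun _ => ∅) m = v m := by
  induction n generalizing m with
  | zero => omega
  | succ n ih =>
    have agree : ∀ m' < m, (gateStep g wires)^[n] (fun _ => ∅) m' = v m' :=
      fun m' hm' => ih ((Fin.lt_def.1 hm').trans_le (Nat.lt_succ_iff.1 hm))
    rw [Function.iterate_succ_apply', hv m, gateStep, gateStep,
      unionOf_congr g fun m' hm' => agree m' (h₁ m m' hm'),
      unionOf_congr g fun m' hm' => agree m' (h₂ m m' hm')]

variable {g : ι → Set Γ} {t : ℕ} {seq : Fin (t + 1) → Set Γ} {ops : Fin (t + 1) → Bool}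
  {pos : Fin k → Fin (t + 1)}

lemma exists_unionOf_of_operand {i : Fin (t + 1)}
    (ih : ∀ j < i, ∃ S, (∀ m, Sum.inr m ∈ S → pos m ≤ j) ∧
      seq j = unionOf g (seq ∘ pos) S)
    {Z : Set Γ} (hZ : Z ∈ Set.range g ∨ ∃ j < i, Z = seq j) :
    ∃ S, (∀ m, Sum.inr m ∈ S → pos m < i) ∧ Z = unionOf g (seq ∘ pos) S := by
  rcases hZ with ⟨a, rfl⟩ | ⟨j, hj, rfl⟩
  · exact ⟨{Sum.inl a}, by simp, by simp [unionOf]⟩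
  · obtain ⟨S, hS, hj'⟩ := ih j hj
    exact ⟨S, fun m hm => (hS m hm).trans_lt hj, hj'⟩

lemma exists_unionOf_of_stepOK (hS : StepOK (Set.range g) seq ops)
    (hpos : ∀ i, ops i = true → ∃ m, pos m = i) (i : Fin (t + 1)) :
    ∃ S, (∀ m, Sum.inr m ∈ S → pos m ≤ i) ∧ seq i = unionOf g (seq ∘ pos) S := by
  induction i using WellFoundedLT.induction with
  | _ i ih =>
  by_cases hop : ops i = true
  · obtain ⟨m, rfl⟩ := hpos i hop
    exact ⟨{Sum.inr m}, by simp, by simp [unionOf]⟩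
  · obtain ⟨X, Y, hX, hY, hi⟩ := hS i
    obtain ⟨SX, hSX, rfl⟩ := exists_unionOf_of_operand ih hX
    obtain ⟨SY, hSY, rfl⟩ := exists_unionOf_of_operand ih hY
    refine ⟨SX ∪ SY, ?_, by rw [hi, if_neg hop, unionOf, unionOf, unionOf, Set.biUnion_union]⟩
    rintro m (hm | hm)
    exacts [(hSX m hm).le, (hSY m hm).le]

lemma exists_circuit_eval_eq (hS : StepOK (Set.range g) seq ops) :
    ∃ c : Circuit ι (interCount ops), c.eval g = seq (Fin.last t) := by
  classical
  let e := (Finset.univ.filter fun i => ops i = true).orderIsoOfFin (k := interCount ops) rfl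
  let pos : Fin (interCount ops) → Fin (t + 1) := fun m => e m
  have pos_strictMono : StrictMono pos := fun a b h => e.strictMono h
  have hpos : ∀ i, ops i = true → ∃ m, pos m = i := fun i hi =>
    ⟨e.symm ⟨i, by simpa using hi⟩, by simp [pos]⟩
  have hunion := exists_unionOf_of_stepOK hS hpos
  have hgate : ∀ m, ∃ P Q : Set (ι ⊕ Fin (interCount ops)),
      (∀ m', Sum.inr m' ∈ P → m' < m) ∧ (∀ m', Sum.inr m' ∈ Q → m' < m) ∧
      seq (pos m) = unionOf g (seq ∘ pos) P ∩ unionOf g (seq ∘ pos) Q := by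
    intro m
    obtain ⟨X, Y, hX, hY, hm⟩ := hS (pos m)
    have ih : ∀ j < pos m, _ := fun j _ => hunion j
    obtain ⟨P, hP, rfl⟩ := exists_unionOf_of_operand ih hX
    obtain ⟨Q, hQ, rfl⟩ := exists_unionOf_of_operand ih hY
    refine ⟨P, Q, fun m' h => pos_strictMono.lt_iff_lt.1 (hP m' h),
      fun m' h => pos_strictMono.lt_iff_lt.1 (hQ m' h), ?_⟩
    rw [hm, if_pos (Finset.mem_filter.1 (e m).2).2]
  choose P Q hP hQ hPQ using hgate
  obtain ⟨T, -, hT⟩ := hunion (Fin.last t)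
  refine ⟨(fun m => (P m, Q m), T), ?_⟩
  rw [Circuit.eval, hT]
  exact unionOf_congr g fun m _ =>
    iterate_gateStep_eq (wires := fun m => (P m, Q m)) (v := seq ∘ pos) hPQ hP hQ _ m.2

end Circuits

section Counting

variable {Γ ι : Type*}

lemma card_circuit [Fintype ι] (k : ℕ) :
    Fintype.card (Circuit ι k) = 2 ^ ((Fintype.card ι + k) * (2 * k + 1)) := by
  classical
  simp only [Circuit, Fintype.card_prod, Fintype.card_fun, Fintype.card_set, Fintype.card_sum,
    Fintype.card_fin]
  rw [← pow_add, ← pow_mul, ← pow_add]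
  ring_nf

lemma ncard_setOf_dcap_le [Fintype ι] (g : ι → Set Γ) (k : ℕ) :
    {A | Dcap A (Set.range g) ≤ k}.ncard ≤ 2 ^ ((Fintype.card ι + k) * (2 * k + 1)) := by
  classical
  have hsub : {A | Dcap A (Set.range g) ≤ k} ⊆
      Set.range (Circuit.eval g : Circuit ι k → Set Γ) := by
    intro A hA
    obtain ⟨t, seq, ops, hS, rfl, rfl⟩ := exists_stepOK_of_dcap_le hA
    exact exists_circuit_eval_eq hS
  calc _ ≤ (Set.range (Circuit.eval g : Circuit ι k → Set Γ)).ncard :=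
        Set.ncard_le_ncard hsub (Set.finite_range _)
    _ ≤ (Set.univ : Set (Circuit ι k)).ncard := by
        rw [← Set.image_univ]
        exact Set.ncard_image_le Set.finite_univ
    _ = _ := by rw [Set.ncard_univ, Nat.card_eq_fintype_card, card_circuit]

lemma ncard_setOf_dcap_graphGens_le (N M k : ℕ) :
    {G : Finset (Fin N × Fin M) |
        Dcap (↑G : Set (Fin N × Fin M)) (graphGens N M) ≤ k}.ncard ≤
      2 ^ ((N + M + k) * (2 * k + 1)) := by
  have h := ncard_setOf_dcap_le (Sum.elim (rowSet N M) (colSet N M)) k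
  rw [Set.Sum.elim_range, Fintype.card_sum, Fintype.card_fin, Fintype.card_fin] at h
  calc _ = ((↑) '' {G : Finset (Fin N × Fin M) |
          Dcap (↑G : Set (Fin N × Fin M)) (graphGens N M) ≤ k}).ncard :=
        (Finset.coe_injective.injOn.ncard_image).symm
    _ ≤ _ :=
      (Set.ncard_le_ncard (by rintro _ ⟨G, hG, rfl⟩; exact hG) (Set.toFinite _)).trans h

lemma two_mul_add_div_mul_le {N : ℕ} (hN : 8 ≤ N) :
    (N + N + N / 8) * (2 * (N / 8) + 1) ≤ N * N - N := by
  have h8 : 8 * (N / 8) ≤ N := Nat.mul_div_le N 8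
  suffices (N + N + N / 8) * (2 * (N / 8) + 1) + N ≤ N * N by omega
  nlinarith [Nat.mul_le_mul h8 h8, Nat.mul_le_mul_left N h8]

end Counting

lemma toENNReal_bounds_of_div_eight_lt {x : ℕ∞} {N : ℕ} (hlo : ((N / 8 : ℕ) : ℕ∞) < x)
    (hhi : x ≤ N) :
    ENNReal.ofReal (1 / 8 * N) ≤ x.toENNReal ∧ x.toENNReal ≤ ENNReal.ofReal (1 * N) := by
  constructor
  · have hx : ((N / 8 + 1 : ℕ) : ℕ∞) ≤ x := by exact_mod_cast Order.add_one_le_of_lt hlo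
    calc ENNReal.ofReal (1 / 8 * N) ≤ ((N / 8 + 1 : ℕ) : ENNReal) := by
          rw [← ENNReal.ofReal_natCast]
          refine ENNReal.ofReal_le_ofReal ?_
          have : (N : ℝ) < 8 * ((N / 8 : ℕ) : ℝ) + 8 := by
            exact_mod_cast (by omega : N < 8 * (N / 8) + 8)
          push_cast
          linarith
      _ ≤ x.toENNReal := by exact_mod_cast ENat.toENNReal_le.2 hx
  · rw [one_mul, ENNReal.ofReal_natCast]
    exact_mod_cast ENat.toENNReal_le.2 hhi

lemma tendsto_ncard_div_of_ncard_compl_le {E : ∀ N : ℕ, Set (Finset (Fin N × Fin N))}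
    (h : ∀ᶠ N in atTop, (E N)ᶜ.ncard ≤ 2 ^ (N * N - N)) :
    Tendsto (fun N => ((E N).ncard : ℝ) / 2 ^ (N * N)) atTop (nhds 1) := by
  have hsplit : ∀ N,
      ((E N).ncard : ℝ) / 2 ^ (N * N) = 1 - ((E N)ᶜ.ncard : ℝ) / 2 ^ (N * N) := by
    intro N
    have hcard := Set.ncard_add_ncard_compl (E N)
    rw [Nat.card_eq_fintype_card, Fintype.card_finset, Fintype.card_prod, Fintype.card_fin] at hcard
    rw [eq_sub_iff_add_eq, ← add_div, div_eq_one_iff_eq (by positivity)]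
    exact_mod_cast hcard
  have hpow : ∀ N : ℕ, (2 ^ (N * N - N) : ℝ) / 2 ^ (N * N) = (1 / 2) ^ N := by
    intro N
    rw [div_eq_iff (by positivity), ← Nat.sub_add_cancel (Nat.le_mul_self N), pow_add,
      Nat.add_sub_cancel, div_pow, one_pow]
    field_simp
  have hbad : Tendsto (fun N => ((E N)ᶜ.ncard : ℝ) / 2 ^ (N * N)) atTop (nhds 0) := by
    refine tendsto_of_tendsto_of_tendsto_of_le_of_le' tendsto_const_nhds
      (tendsto_pow_atTop_nhds_zero_of_lt_one (r := 1 / 2) (by norm_num) (by norm_num))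
      (.of_forall fun N => by positivity) ?_
    filter_upwards [h] with N hN
    rw [← hpow]
    gcongr
    exact_mod_cast hN
  simpa only [hsplit, sub_zero] using hbad.const_sub 1

/-- Intersection complexity of a random graph: there are constants
`c₁, c₂ > 0` such that, for `G` a uniformly random subset of `[N] × [N]`, the
probability that `c₁·N ≤ D_∩(G | 𝓖_{N,N}) ≤ c₂·N` tends to `1` as `N → ∞`. -/
theorem inter_complexity_random_graph :
    ∃ c₁ c₂ : ℝ, 0 < c₁ ∧ 0 < c₂ ∧
      Filter.Tendsto
        (fun N : ℕ =>
          (({G : Finset (Fin N × Fin N) |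
              ENNReal.ofReal (c₁ * N) ≤
                ENat.toENNReal (Dcap (↑G : Set (Fin N × Fin N)) (graphGens N N)) ∧
              ENat.toENNReal (Dcap (↑G : Set (Fin N × Fin N)) (graphGens N N)) ≤
                ENNReal.ofReal (c₂ * N)}).ncard : ℝ) / (2 : ℝ) ^ (N * N))
        Filter.atTop (nhds 1) := by
  refine ⟨1 / 8, 1, by norm_num, by norm_num, tendsto_ncard_div_of_ncard_compl_le ?_⟩
  filter_upwards [eventually_ge_atTop 8] with N hN
  refine (Set.ncard_le_ncard (t := {G : Finset (Fin N × Fin N) |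
      Dcap (↑G : Set (Fin N × Fin N)) (graphGens N N) ≤ (N / 8 : ℕ)})
    (fun G hG => ?_) (Set.toFinite _)).trans ?_
  · by_contra hlo
    exact hG (toENNReal_bounds_of_div_eight_lt (not_le.1 hlo) (dcap_le_of_two_le (by omega) _))
  · exact (ncard_setOf_dcap_graphGens_le N N (N / 8)).trans
      (Nat.pow_le_pow_right two_pos (two_mul_add_div_mul_le hN))
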